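/- Let V be a real inner product space of finite dimension at least 3, and let R be an algebraic curvature operator on V such that R(x,y)z = 0 whenever z is orthogonal to both x and y (equivalently, R(x,y) ∈ 𝔰𝔬(span{x,y}) for all x, y ∈ V). Then there exists λ ∈ ℝ such that R = λ R^Id. -/

import Mathlib

open RealInnerProductSpace

variable {V : Type*} [NormedAddCommGroup V] [InnerProductSpace ℝ V]

/-- An `r`-fold vector cross product on a real inner product space: an alternating
multilinear map `χ` whose value is orthogonal to each of its arguments and whose
squared norm is the Gram determinant of the arguments. -/
def IsVCP {r : ℕ} (χ : AlternatingMap ℝ V V (Fin r)) : Prop :=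
  (∀ v : Fin r → V, ∀ i : Fin r, ⟪χ v, v i⟫ = 0) ∧
  (∀ v : Fin r → V, ⟪χ v, χ v⟫ = (Matrix.of fun i j : Fin r => ⟪v i, v j⟫).det)

/-- An algebraic curvature operator: a bilinear map `V × V → End(V)` that is
antisymmetric, takes skew-adjoint values, and satisfies the first Bianchi identity. -/
def IsAlgCurvature (R : V →ₗ[ℝ] V →ₗ[ℝ] V →ₗ[ℝ] V) : Prop :=
  (∀ x y, R x y = - R y x) ∧
  (∀ x y z w, ⟪R x y z, w⟫ = - ⟪R x y w, z⟫) ∧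
  (∀ x y z, R x y z + R y z x + R z x y = 0)

/-- Orthogonal projection onto the orthogonal complement of the span of `S`. -/
noncomputable def projPerp [FiniteDimensional ℝ V] (S : Set V) (z : V) : V :=
  (Submodule.orthogonalProjection (Submodule.span ℝ S)ᗮ z : V)

/-- The constant-curvature operator `R^Id(x,y)z = ⟪y,z⟫ • x - ⟪x,z⟫ • y`. -/
noncomputable def RId : V →ₗ[ℝ] V →ₗ[ℝ] V →ₗ[ℝ] V :=
  LinearMap.mk₂ ℝ
    (fun x y =>
      { toFun := fun z => ⟪y, z⟫ • x - ⟪x, z⟫ • y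
        map_add' := fun a b => by simp only [inner_add_right, add_smul]; abel
        map_smul' := fun c a => by
          simp only [inner_smul_right, RingHom.id_apply, smul_sub, smul_smul] })
    (fun x x' y => by ext z; simp [inner_add_left, add_smul]; abel)
    (fun c x y => by ext z; simp [real_inner_smul_left, smul_sub, smul_smul, mul_comm])
    (fun x y y' => by ext z; simp [inner_add_left, add_smul]; abel)
    (fun c x y => by ext z; simp [real_inner_smul_left, smul_sub, smul_smul, mul_comm])

/-- The first CR-integrability condition for an algebraic curvature operator `R`
with respect to an `(m+2)`-fold VCP `χ`: for every orthonormal `(m+2)`-tuple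
`w = (w₁, …, w_r)` and every `z` orthogonal to `w₂, …, w_r`, the orthogonal
projection `P` onto `span{w₂,…,w_r}ᗮ` satisfies
`P (R(w₁,w₂) (χ(w₂,…,w_r,z))) = χ(w₂,…,w_r, P (R(w₁,w₂) z))`. -/
def FirstCR [FiniteDimensional ℝ V] {m : ℕ} (χ : AlternatingMap ℝ V V (Fin (m + 2)))
    (R : V →ₗ[ℝ] V →ₗ[ℝ] V →ₗ[ℝ] V) : Prop :=
  ∀ w : Fin (m + 2) → V, Orthonormal ℝ w → ∀ z : V,
    (∀ i : Fin (m + 1), ⟪z, Fin.tail w i⟫ = 0) →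
    projPerp (Set.range (Fin.tail w)) (R (w 0) (w 1) (χ (Fin.snoc (Fin.tail w) z))) =
      χ (Fin.snoc (Fin.tail w) (projPerp (Set.range (Fin.tail w)) (R (w 0) (w 1) z)))

/-!
Flatness together with skew-adjointness forces `R(x,y)` to act inside `span {x, y}`, so an
operator of this kind is determined by its sectional curvatures `⟪R(eᵢ,eⱼ)eⱼ, eᵢ⟫` on an
orthonormal basis. Expanding `R(eᵢ, eⱼ + eₖ)(eⱼ - eₖ) = 0` shows that these depend only on `i`,
and the pair symmetry `⟪R(x,y)y, x⟫ = ⟪R(y,x)x, y⟫` then makes them a single constant `l`.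
Hence `R - l • R^Id` has vanishing sectional curvatures on the basis and is zero.
-/

section

variable {R : V →ₗ[ℝ] V →ₗ[ℝ] V →ₗ[ℝ] V}

lemma inner_apply_self_eq_zero_of_skew (hskew : ∀ x y z w, ⟪R x y z, w⟫ = -⟪R x y w, z⟫)
    (x y z : V) : ⟪R x y z, z⟫ = 0 :=
  self_eq_neg.mp (hskew x y z z)

lemma inner_apply_self_comm (hanti : ∀ x y, R x y = -R y x)
    (hskew : ∀ x y z w, ⟪R x y z, w⟫ = -⟪R x y w, z⟫) (x y : V) :
    ⟪R x y y, x⟫ = ⟪R y x x, y⟫ := by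
  rw [hanti x y, LinearMap.neg_apply, inner_neg_left, hskew, neg_neg]

lemma inner_apply_eq_zero_of_orthogonal (hskew : ∀ x y z w, ⟪R x y z, w⟫ = -⟪R x y w, z⟫)
    (hflat : ∀ x y z, ⟪z, x⟫ = 0 → ⟪z, y⟫ = 0 → R x y z = 0) {x y w : V}
    (hx : ⟪w, x⟫ = 0) (hy : ⟪w, y⟫ = 0) (z : V) : ⟪R x y z, w⟫ = 0 := by
  rw [hskew, hflat x y w hx hy, inner_zero_left, neg_zero]

lemma apply_self_eq_of_orthogonal (hflat : ∀ x y z, ⟪z, x⟫ = 0 → ⟪z, y⟫ = 0 → R x y z = 0)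
    {x y z : V} (hyx : ⟪y, x⟫ = 0) (hzx : ⟪z, x⟫ = 0) (hzy : ⟪z, y⟫ = 0) (hyz : ‖y‖ = ‖z‖) :
    R x y y = R x z z := by
  -- `y - z ⊥ y + z` because `‖y‖ = ‖z‖`
  have hsum : R x (y + z) (y - z) = 0 := by
    refine hflat _ _ _ (by rw [inner_sub_left, hyx, hzx, sub_zero]) ?_
    rw [inner_sub_left, inner_add_right, inner_add_right, real_inner_self_eq_norm_sq,
      real_inner_self_eq_norm_sq, hzy, real_inner_comm, hzy, hyz]
    ring
  have hyzx : ⟪y, z⟫ = 0 := by rw [real_inner_comm, hzy]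
  simp only [map_add, map_sub, LinearMap.add_apply, hflat x y z hzx hzy,
    hflat x z y hyx hyzx] at hsum
  rw [← sub_eq_zero, ← hsum]
  abel

end

lemma exists_offDiag_eq_of_symm_of_row_eq {ι α : Type*} [Nonempty α] {κ : ι → ι → α}
    (hsymm : ∀ i j, κ i j = κ j i) (hrow : ∀ i j k, i ≠ j → i ≠ k → κ i j = κ i k) :
    ∃ l, ∀ i j, i ≠ j → κ i j = l := by
  by_cases hpair : ∃ i₀ j₀ : ι, i₀ ≠ j₀
  · obtain ⟨i₀, j₀, h₀⟩ := hpair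
    refine ⟨κ i₀ j₀, fun i j hij => ?_⟩
    by_cases hi : i = i₀
    · subst hi
      exact hrow i j j₀ hij h₀
    · rw [hrow i j i₀ hij hi, hsymm, hrow i₀ i j₀ (Ne.symm hi) h₀]
  · push Not at hpair
    exact ⟨Classical.arbitrary α, fun i j hij => absurd (hpair i j) hij⟩

section

variable {ι : Type*} [Fintype ι] {R : V →ₗ[ℝ] V →ₗ[ℝ] V →ₗ[ℝ] V}

lemma exists_inner_apply_basis_eq (b : OrthonormalBasis ι ℝ V) (hanti : ∀ x y, R x y = -R y x)
    (hskew : ∀ x y z w, ⟪R x y z, w⟫ = -⟪R x y w, z⟫)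
    (hflat : ∀ x y z, ⟪z, x⟫ = 0 → ⟪z, y⟫ = 0 → R x y z = 0) :
    ∃ l : ℝ, ∀ i j, i ≠ j → ⟪R (b i) (b j) (b j), b i⟫ = l := by
  refine exists_offDiag_eq_of_symm_of_row_eq (fun i j => inner_apply_self_comm hanti hskew _ _)
    fun i j k hij hik => ?_
  obtain rfl | hjk := eq_or_ne j k
  · rfl
  rw [apply_self_eq_of_orthogonal hflat (b.inner_eq_zero hij.symm) (b.inner_eq_zero hik.symm)
    (b.inner_eq_zero hjk.symm) (by rw [b.norm_eq_one, b.norm_eq_one])]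

lemma eq_zero_of_inner_apply_basis_eq_zero (b : OrthonormalBasis ι ℝ V)
    (hanti : ∀ x y, R x y = -R y x) (hskew : ∀ x y z w, ⟪R x y z, w⟫ = -⟪R x y w, z⟫)
    (hflat : ∀ x y z, ⟪z, x⟫ = 0 → ⟪z, y⟫ = 0 → R x y z = 0)
    (hsec : ∀ i j, i ≠ j → ⟪R (b i) (b j) (b j), b i⟫ = 0) : R = 0 := by
  have hself : ∀ i j, R (b i) (b j) (b j) = 0 := by
    intro i j
    refine InnerProductSpace.ext_inner_left_basis b.toBasis fun m => ?_
    rw [OrthonormalBasis.coe_toBasis, inner_zero_right, real_inner_comm]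
    by_cases hmj : m = j
    · rw [hmj, inner_apply_self_eq_zero_of_skew hskew]
    by_cases hmi : m = i
    · rw [hmi] at hmj ⊢
      exact hsec i j hmj
    exact inner_apply_eq_zero_of_orthogonal hskew hflat (b.inner_eq_zero hmi)
      (b.inner_eq_zero hmj) _
  refine b.toBasis.ext fun i => b.toBasis.ext fun j => b.toBasis.ext fun k => ?_
  simp only [OrthonormalBasis.coe_toBasis, LinearMap.zero_apply]
  by_cases hkj : k = j
  · rw [hkj, hself]
  by_cases hki : k = i
  · rw [hki, hanti, LinearMap.neg_apply, hself, neg_zero]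
  exact hflat _ _ _ (b.inner_eq_zero hki) (b.inner_eq_zero hkj)

end

lemma RId_apply (x y z : V) : RId x y z = ⟪y, z⟫ • x - ⟪x, z⟫ • y := rfl

lemma RId_swap (x y : V) : RId x y = -RId y x := by
  ext z
  simp only [RId_apply, LinearMap.neg_apply, neg_sub]

lemma inner_RId_apply (x y z w : V) : ⟪RId x y z, w⟫ = -⟪RId x y w, z⟫ := by
  simp only [RId_apply, inner_sub_left, real_inner_smul_left]
  ring

lemma RId_apply_eq_zero_of_orthogonal {x y z : V} (hx : ⟪z, x⟫ = 0) (hy : ⟪z, y⟫ = 0) :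
    RId x y z = 0 := by
  rw [RId_apply, real_inner_comm, hy, real_inner_comm, hx, zero_smul, zero_smul, sub_zero]

lemma inner_RId_apply_self (x y : V) : ⟪RId x y y, x⟫ = ‖x‖ ^ 2 * ‖y‖ ^ 2 - ⟪x, y⟫ ^ 2 := by
  simp only [RId_apply, inner_sub_left, real_inner_smul_left, real_inner_self_eq_norm_sq,
    real_inner_comm x y]
  ring

theorem flat_on_perp_implies_constant_curvature_general {V : Type*} [NormedAddCommGroup V]
    [InnerProductSpace ℝ V] [FiniteDimensional ℝ V]
    (R : V →ₗ[ℝ] V →ₗ[ℝ] V →ₗ[ℝ] V) (hR : IsAlgCurvature R)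
    (hflat : ∀ x y z : V, ⟪z, x⟫ = 0 → ⟪z, y⟫ = 0 → R x y z = 0) :
    ∃ l : ℝ, R = l • RId := by
  obtain ⟨hanti, hskew, -⟩ := hR
  let b := stdOrthonormalBasis ℝ V
  obtain ⟨l, hl⟩ := exists_inner_apply_basis_eq b hanti hskew hflat
  refine ⟨l, sub_eq_zero.mp (eq_zero_of_inner_apply_basis_eq_zero b ?_ ?_ ?_ ?_)⟩
  · intro x y
    simp only [LinearMap.sub_apply, LinearMap.smul_apply, hanti x y, RId_swap x y, smul_neg,
      neg_sub_neg, neg_sub]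
  · intro x y z w
    simp only [LinearMap.sub_apply, LinearMap.smul_apply, inner_sub_left, real_inner_smul_left,
      hskew x y z w, inner_RId_apply x y z w]
    ring
  · intro x y z hx hy
    simp only [LinearMap.sub_apply, LinearMap.smul_apply, hflat x y z hx hy,
      RId_apply_eq_zero_of_orthogonal hx hy, smul_zero, sub_zero]
  · intro i j hij
    simp only [LinearMap.sub_apply, LinearMap.smul_apply, inner_sub_left, real_inner_smul_left,
      hl i j hij, inner_RId_apply_self, b.norm_eq_one, b.inner_eq_zero hij]
    ring

/-- Schur-type statement: on a real inner product space of finite dimension at least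
3, an algebraic curvature operator with `R(x,y)z = 0` whenever `z ⊥ x` and `z ⊥ y`
is a scalar multiple of `R^Id`. -/
theorem flat_on_perp_implies_constant_curvature {V : Type*} [NormedAddCommGroup V]
    [InnerProductSpace ℝ V] [FiniteDimensional ℝ V] (hdim : 3 ≤ Module.finrank ℝ V)
    (R : V →ₗ[ℝ] V →ₗ[ℝ] V →ₗ[ℝ] V) (hR : IsAlgCurvature R)
    (hflat : ∀ x y z : V, ⟪z, x⟫ = 0 → ⟪z, y⟫ = 0 → R x y z = 0) :
    ∃ l : ℝ, R = l • RId :=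
  flat_on_perp_implies_constant_curvature_general R hR hflat
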